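/- In the setting of a reduced no-instance with nice forest F of maximum number of leaves and key-vertex-free subpath P' of P with |P'| >= 3: exactly 2 vertices of P' are heads of arcs of D whose tails lie outside P', namely p_x and the first vertex of the directed path Q' = F[V(P')]. -/

import Mathlib

universe u

variable {V : Type u}

/-- `T` is an out-tree of the digraph `D` rooted at `r` spanning the vertex set `S`:
an oriented tree with all arcs directed away from the unique root `r`. -/
structure IsOutTreeOn (D : V → V → Prop) (r : V) (S : Set V) (T : V → V → Prop) : Prop where
  sub : ∀ u v, T u v → D u v
  mem_left : ∀ u v, T u v → u ∈ S
  mem_right : ∀ u v, T u v → v ∈ S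
  root_mem : r ∈ S
  no_in_root : ∀ u, ¬ T u r
  unique_parent : ∀ v ∈ S, v ≠ r → ∃! u, T u v
  reach : ∀ v ∈ S, Relation.ReflTransGen T r v

/-- An out-branching of `D` rooted at `r`: a spanning out-tree. -/
def IsOutBranching (D : V → V → Prop) (r : V) (T : V → V → Prop) : Prop :=
  IsOutTreeOn D r Set.univ T

/-- The leaves of an out-tree `T` on vertex set `S`: vertices of out-degree 0. -/
def treeLeaves (T : V → V → Prop) (S : Set V) : Set V :=
  {v ∈ S | ∀ w, ¬ T v w}

def HasOutBranchingWithLeaves (D : V → V → Prop) (r : V) (k : ℕ) : Prop :=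
  ∃ T : V → V → Prop, IsOutBranching D r T ∧ k ≤ (treeLeaves T Set.univ).ncard

def HasOutBranchingOnWithLeaves (D : V → V → Prop) (r : V) (S : Set V) (k : ℕ) : Prop :=
  ∃ T : V → V → Prop, IsOutTreeOn D r S T ∧ k ≤ (treeLeaves T S).ncard

def HasOutTreeWithLeaves (D : V → V → Prop) (k : ℕ) : Prop :=
  ∃ (r : V) (S : Set V) (T : V → V → Prop),
    IsOutTreeOn D r S T ∧ k ≤ (treeLeaves T S).ncard

/-- A (directed) walk in `D` from `a` to `b`, given by its list of vertices. -/
def IsWalk (D : V → V → Prop) (a b : V) (q : List V) : Prop :=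
  q ≠ [] ∧ q.head? = some a ∧ q.getLast? = some b ∧ q.Chain' D

/-- The vertex `u` disconnects `v` from the root `r`:
every directed path from `r` to `v` contains `u`. -/
def VertexDisconnects (D : V → V → Prop) (r u v : V) : Prop :=
  u ≠ v ∧ ∀ q : List V, IsWalk D r v q → u ∈ q

/-- The vertex set `S` disconnects `v` from the root `r`. -/
def SetDisconnects (D : V → V → Prop) (r : V) (S : Set V) (v : V) : Prop :=
  v ∉ S ∧ ∀ q : List V, IsWalk D r v q → ∃ x ∈ S, x ∈ q

/-- The arc `(u, v)` disconnects `w` from the root `r`: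
every directed path from `r` to `w` uses the arc `(u, v)`. -/
def ArcDisconnects (D : V → V → Prop) (r u v w : V) : Prop :=
  ∀ q : List V, IsWalk D r w q → (u, v) ∈ q.zip q.tail

/-- A BFS tree of `D` rooted at `r`: an out-branching together with a level (depth)
function such that `D` has no forward arcs. -/
structure IsBFSTree (D : V → V → Prop) (r : V) (T : V → V → Prop) (depth : V → ℕ) : Prop where
  branching : IsOutBranching D r T
  level : ∀ u v, T u v → depth v = depth u + 1
  root_level : depth r = 0
  no_forward : ∀ u v, D u v → depth v ≤ depth u + 1

/-- Contraction of the arc `(u, v)`: the new vertex is identified with `u`,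
and `v` is removed. -/
def contractArc (D : V → V → Prop) (u v : V) : V → V → Prop :=
  fun a b => a ≠ v ∧ b ≠ v ∧ a ≠ b ∧
    (D a b ∨ (a = u ∧ D v b) ∨ (b = u ∧ D a v))

/-- Reduction Rule 5 (two directional path rule) is applicable to `D`. -/
def Rule5Applicable (D : V → V → Prop) : Prop :=
  ∃ l : ℕ, (l = 7 ∨ l = 8) ∧
    ∃ pp : ℕ → V, Set.InjOn pp (Set.Iio l) ∧
      (∀ i, i + 1 < l → D (pp i) (pp (i + 1))) ∧
      ∃ pin ∈ ({pp (l - 2), pp (l - 1)} : Set V),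
        ∃ pout ∈ ({pp 0, pp 1} : Set V),
          (∀ v ∈ pp '' Set.Iio l, (∃ u, u ∉ pp '' Set.Iio l ∧ D u v) → v = pp 0 ∨ v = pin) ∧
          (∀ v ∈ pp '' Set.Iio l, (∃ u, u ∉ pp '' Set.Iio l ∧ D v u) → v = pp (l - 1) ∨ v = pout) ∧
          IsOutTreeOn D (pp 0) (pp '' Set.Iio l)
            (fun a b => ∃ i, i + 1 < l ∧ a = pp i ∧ b = pp (i + 1)) ∧
          (∀ T : V → V → Prop, IsOutTreeOn D (pp 0) (pp '' Set.Iio l) T →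
            T = fun a b => ∃ i, i + 1 < l ∧ a = pp i ∧ b = pp (i + 1)) ∧
          ∃ Q : V → V → Prop,
            IsOutTreeOn D pin (pp '' Set.Iio l) Q ∧
            (∀ v, {w | Q v w}.ncard ≤ 1) ∧
            (∀ T : V → V → Prop, IsOutTreeOn D pin (pp '' Set.Iio l) T → T = Q) ∧
            (∀ i, i + 1 < l → pout = pp i → ∀ bq, Q (pp (l - 1)) bq → pp (i + 1) ≠ bq)

/-- `D` with root `r` is reduced: none of the five reduction rules applies. -/
structure Reduced (D : V → V → Prop) (r : V) : Prop where
  reach : ∀ v, Relation.ReflTransGen D r v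
  rule2 : ∀ u v, VertexDisconnects D r u v → ¬ D v u
  rule3 : ∀ u v w₁ w₂, D u v → w₁ ≠ w₂ →
    ArcDisconnects D r u v w₁ → ArcDisconnects D r u v w₂ → False
  rule4 : ∀ (S : Set V) (v w : V), S.ncard ≤ 2 → SetDisconnects D r S v →
    (∀ x ∈ S, D x w) → ¬ D v w
  rule5 : ¬ Rule5Applicable D

/-- A nice forest `F` of the path `p 0, p 1, …, p l`, a spanning subforest of
`D[V(P)]` consisting of out-trees rooted at the vertices of `S`. -/
def NiceForest (D : V → V → Prop) (l : ℕ) (p : ℕ → V) (S : Set V)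
    (F : V → V → Prop) : Prop :=
  (∀ u v, F u v → D u v ∧ u ∈ p '' Set.Iic l ∧ v ∈ p '' Set.Iic l) ∧
  (∀ s ∈ S, ∀ u, ¬ F u s) ∧
  (∀ v ∈ p '' Set.Iic l, v ∉ S → ∃! u, F u v) ∧
  (∀ v ∈ p '' Set.Iic l, ∃ s ∈ S, Relation.ReflTransGen F s v) ∧
  (∀ i j, i ≤ l → j ≤ l → i < j → F (p i) (p j) →
    2 ≤ {w | F (p i) w}.ncard ∨ {u | D u (p j)}.ncard = 1) ∧
  (∀ i j, i ≤ l → j ≤ l → j < i → F (p i) (p j) → ∀ q, i < q → q ≤ l → ¬ D (p q) (p j))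

/-- The key vertices of a nice forest `F`: the roots `S`, the leaves of `F`,
the vertices of out-degree at least 2 in `F`, and their children. -/
def keyVertices (l : ℕ) (p : ℕ → V) (S : Set V) (F : V → V → Prop) : Set V :=
  S ∪ treeLeaves F (p '' Set.Iic l) ∪ {v | 2 ≤ {w | F v w}.ncard} ∪
    {v | ∃ u, F u v ∧ 2 ≤ {w | F u w}.ncard}

/-- A nice willow graph with stem `p 0, p 1, …, p (n-1)` (bottom `p 0`, top `p (n-1)`)
and backward-arc set `A2`. -/
structure IsNiceWillow (A2 : V → V → Prop) (n : ℕ) (p : ℕ → V) : Prop where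
  three_le : 3 ≤ n
  inj : Set.InjOn p (Set.Iio n)
  surj : ∀ v, ∃ i < n, p i = v
  backward : ∀ u v, A2 u v → ∃ i j, i < n ∧ j < i ∧ u = p i ∧ v = p j
  unique_source : ∀ i, i + 1 < n → ∃ u, A2 u (p i)
  top_arc1 : A2 (p (n - 1)) (p (n - 2))
  top_arc2 : A2 (p (n - 1)) (p (n - 3))
  only1 : ∀ u v, A2 u v → (u = p (n - 2) ∨ v = p (n - 2)) →
    u = p (n - 1) ∧ v = p (n - 2)
  only2 : ∀ u v, A2 u v → (u = p (n - 3) ∨ v = p (n - 3)) →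
    u = p (n - 1) ∧ v = p (n - 3)
  branch : ∃ T : V → V → Prop, IsOutBranching A2 (p (n - 1)) T

/-- The digraph of a willow: the stem arcs together with the backward arcs `A2`. -/
def willowD (A2 : V → V → Prop) (n : ℕ) (p : ℕ → V) : V → V → Prop :=
  fun a b => (∃ i, i + 1 < n ∧ a = p i ∧ b = p (i + 1)) ∨ A2 a b

/-- Disjoint union of a family of digraphs. -/
def sigmaUnion {ι : Type*} {Vv : ι → Type*} (W : ∀ i, Vv i → Vv i → Prop) :
    (Σ i, Vv i) → (Σ i, Vv i) → Prop :=
  fun x y => ∃ h : y.1 = x.1, W x.1 x.2 (cast (congrArg Vv h) y.2)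

/-- Vertices of the digraph constructed from a Set Cover instance. -/
inductive SCVert (m n : ℕ) : Type
  | root : SCVert m n
  | pv : SCVert m n
  | pv' : SCVert m n
  | s : Fin m → SCVert m n
  | e : Fin n → SCVert m n

/-- Arcs of the digraph constructed from a Set Cover instance. -/
def scArcs (m n : ℕ) (Fam : Fin m → Set (Fin n)) : SCVert m n → SCVert m n → Prop
  | .root, .s _ => True
  | .root, .pv => True
  | .root, .pv' => True
  | .s i, .e j => j ∈ Fam i
  | .e a, .e c => (c : ℕ) + 1 = (a : ℕ)
  | .s a, .s c => (c : ℕ) + 1 = (a : ℕ)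
  | .e a, .s c => (a : ℕ) = 0 ∧ (c : ℕ) + 1 = m
  | .s a, .pv => (a : ℕ) = 0
  | .pv, .pv' => True
  | .pv', .root => True
  | _, _ => False

/-! If `p x` were also the first vertex of `Q'`, every arc entering `P'` would end in `p x`;
as `T` has no forward arcs, the only arc from `p x` into the rest of `P'` is `(p x, p (x+1))`,
so this arc would lie on every path from `r` to both `p (x+1)` and `p (x+2)`, which Rule 3
forbids. For the set equality, a vertex `p b` of `P'` other than `p x` and the first vertex of
`Q'` has its `F`-parent `p i` in `P'`, and `p i` is not branching. An arc from outside `P'`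
into `p b` starts, again by the absence of forward arcs, at some `p j` with `j > y`; if `i < b`
niceness forces `p b` to have in-degree one, so `p j = p i`, and if `i > b` niceness forbids
the arc outright. -/

def entryVertices (D : V → V → Prop) (X : Set V) : Set V :=
  {v ∈ X | ∃ u, u ∉ X ∧ D u v}

theorem mem_of_isChain_of_forall_adj_mem {D : V → V → Prop} {a b : V} (X : Set V)
    (hX : ∀ u v, D u v → v ∈ X → u ∉ X → u = a ∧ v = b) :
    ∀ q : List V, q.IsChain D → (a, b) ∉ q.zip q.tail →
      ∀ w, q.getLast? = some w → w ∈ X → ∀ v ∈ q, v ∈ X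
  | [], _, _, _, _, _, v, hv => absurd hv List.not_mem_nil
  | [u], _, _, w, hlast, hw, v, hv => by
    obtain rfl : u = w := by simpa using hlast
    obtain rfl : v = u := by simpa using hv
    exact hw
  | u :: u' :: t, hchain, hab, w, hlast, hw, v, hv => by
    rw [List.isChain_cons_cons] at hchain
    have htail := mem_of_isChain_of_forall_adj_mem X hX (u' :: t) hchain.2
      (fun h => hab (List.mem_cons_of_mem _ h)) w (by simpa using hlast) hw
    rcases List.mem_cons.mp hv with rfl | hv
    · by_contra hvX
      obtain ⟨rfl, rfl⟩ := hX _ _ hchain.1 (htail _ List.mem_cons_self) hvX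
      exact hab List.mem_cons_self
    · exact htail v hv

theorem arcDisconnects_of_forall_adj_mem {D : V → V → Prop} {r a b w : V} (X : Set V)
    (hr : r ∉ X) (hw : w ∈ X) (hX : ∀ u v, D u v → v ∈ X → u ∉ X → u = a ∧ v = b) :
    ArcDisconnects D r a b w := by
  rintro (_ | ⟨v, q⟩) ⟨hne, hhead, hlast, hchain⟩
  · exact absurd rfl hne
  obtain rfl : v = r := by simpa using hhead
  by_contra hab
  exact hr (mem_of_isChain_of_forall_adj_mem X hX _ hchain hab w hlast hw _ List.mem_cons_self)

section EnumeratedPath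

variable {F : V → V → Prop} {X : Set V} {n : ℕ} {q : ℕ → V}

theorem exists_adj_of_ne_head (hqinj : Set.InjOn q (Set.Iic n)) (hqim : q '' Set.Iic n = X)
    (hqarc : ∀ a b, (F a b ∧ a ∈ X ∧ b ∈ X) ↔ ∃ i, i < n ∧ a = q i ∧ b = q (i + 1))
    {v : V} (hv : v ∈ X) (hne : v ≠ q 0) : ∃ u ∈ X, u ≠ v ∧ F u v := by
  obtain ⟨_ | k, hk, rfl⟩ := hqim ▸ hv
  · exact absurd rfl hne
  have hk : k + 1 ≤ n := hk
  obtain ⟨hF, hkX, -⟩ := (hqarc (q k) (q (k + 1))).mpr ⟨k, by omega, rfl, rfl⟩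
  refine ⟨q k, hkX, fun h => ?_, hF⟩
  have := hqinj (Set.mem_Iic.mpr (by omega)) (Set.mem_Iic.mpr hk) h
  omega

theorem notMem_of_adj_head (hqinj : Set.InjOn q (Set.Iic n)) (hqim : q '' Set.Iic n = X)
    (hqarc : ∀ a b, (F a b ∧ a ∈ X ∧ b ∈ X) ↔ ∃ i, i < n ∧ a = q i ∧ b = q (i + 1))
    {u : V} (hu : F u (q 0)) : u ∉ X := by
  intro huX
  have hq0 : q 0 ∈ X := hqim ▸ ⟨0, Set.mem_Iic.mpr n.zero_le, rfl⟩
  obtain ⟨i, hi, -, h⟩ := (hqarc u (q 0)).mp ⟨hu, huX, hq0⟩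
  have := hqinj (Set.mem_Iic.mpr n.zero_le) (Set.mem_Iic.mpr (by omega : i + 1 ≤ n)) h
  omega

end EnumeratedPath

section BFSPath

variable {D T : V → V → Prop} {r : V} {depth : V → ℕ} {l : ℕ} {p : ℕ → V}

theorem IsBFSTree.depth_path (hBFS : IsBFSTree D r T depth)
    (hpath : ∀ i, i < l → T (p i) (p (i + 1))) {i : ℕ} (hi : i ≤ l) :
    depth (p i) = depth (p 0) + i := by
  induction i with
  | zero => rfl
  | succ i ih => rw [hBFS.level _ _ (hpath i (by omega)), ih (by omega), add_assoc]

theorem IsBFSTree.le_succ_of_adj_path (hBFS : IsBFSTree D r T depth)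
    (hpath : ∀ i, i < l → T (p i) (p (i + 1))) {a b : ℕ} (ha : a ≤ l) (hb : b ≤ l)
    (hab : D (p a) (p b)) : b ≤ a + 1 := by
  have := hBFS.no_forward _ _ hab
  rw [hBFS.depth_path hpath ha, hBFS.depth_path hpath hb] at this
  omega

theorem IsBFSTree.path_ne_root (hBFS : IsBFSTree D r T depth)
    (hpath : ∀ i, i < l → T (p i) (p (i + 1))) {i : ℕ} (hi0 : 0 < i) (hi : i ≤ l) :
    p i ≠ r := by
  intro h
  have := hBFS.depth_path hpath hi
  rw [h, hBFS.root_level] at this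
  omega

end BFSPath

section NiceForest

variable {D F : V → V → Prop} {l : ℕ} {p : ℕ → V} {S : Set V}

theorem NiceForest.not_adj_of_parent_lt (hF : NiceForest D l p S F)
    (hinj : Set.InjOn p (Set.Iic l)) {i b j : ℕ} (hi : i ≤ l) (hb : b ≤ l) (hj : j ≤ l)
    (hij : i < j) (hib : i ≠ b) (hpar : F (p i) (p b))
    (hbr : ¬ 2 ≤ {w | F (p i) w}.ncard) : ¬ D (p j) (p b) := by
  intro hD
  rcases Nat.lt_or_gt_of_ne hib with h | h
  · obtain ⟨u, hu⟩ := Set.ncard_eq_one.mp ((hF.2.2.2.2.1 i b hi hb h hpar).resolve_left hbr)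
    have hju : p j ∈ ({u} : Set V) := hu ▸ hD
    have hiu : p i ∈ ({u} : Set V) := hu ▸ (hF.1 _ _ hpar).1
    have := hinj (Set.mem_Iic.mpr hj) (Set.mem_Iic.mpr hi) (hju.trans hiu.symm)
    omega
  · exact hF.2.2.2.2.2 i b hi hb h hpar j hij hj hD

theorem NiceForest.head_mem_entryVertices (hF : NiceForest D l p S F) {X : Set V} {n : ℕ}
    {q : ℕ → V} (hqinj : Set.InjOn q (Set.Iic n)) (hqim : q '' Set.Iic n = X)
    (hqarc : ∀ a b, (F a b ∧ a ∈ X ∧ b ∈ X) ↔ ∃ i, i < n ∧ a = q i ∧ b = q (i + 1))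
    (hP : q 0 ∈ p '' Set.Iic l) (hroot : q 0 ∉ S) : q 0 ∈ entryVertices D X := by
  obtain ⟨u, hu, -⟩ := hF.2.2.1 (q 0) hP hroot
  exact ⟨hqim ▸ ⟨0, Set.mem_Iic.mpr n.zero_le, rfl⟩, u, notMem_of_adj_head hqinj hqim hqarc hu,
    (hF.1 _ _ hu).1⟩

variable {x y : ℕ}

theorem NiceForest.notMem_entryVertices (hF : NiceForest D l p S F)
    (hinj : Set.InjOn p (Set.Iic l))
    (hfwd : ∀ a b, a ≤ l → b ≤ l → D (p a) (p b) → b ≤ a + 1)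
    (hS : S = {v ∈ p '' Set.Iio l | ∃ u, u ∉ p '' Set.Iic l ∧ D u v}) (hy : y < l)
    (hnokey : ∀ i, x ≤ i → i ≤ y → p i ∉ keyVertices l p S F) {b : ℕ} (hxb : x < b)
    (hby : b ≤ y) (hpar : ∃ u ∈ p '' Set.Icc x y, u ≠ p b ∧ F u (p b)) :
    p b ∉ entryVertices D (p '' Set.Icc x y) := by
  rintro ⟨-, u, hu, hD⟩
  obtain ⟨_, ⟨i, ⟨hxi, hiy⟩, rfl⟩, hib, hpar⟩ := hpar
  have hroot : p b ∉ S := fun h => hnokey b hxb.le hby (Or.inl (Or.inl (Or.inl h)))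
  have hbr : ¬ 2 ≤ {w | F (p i) w}.ncard := fun h => hnokey i hxi hiy (Or.inl (Or.inr h))
  obtain ⟨j, hj, rfl⟩ : u ∈ p '' Set.Iic l := by
    by_contra hout
    exact hroot (hS ▸ ⟨⟨b, Set.mem_Iio.mpr (by omega), rfl⟩, u, hout, hD⟩)
  have hj : j ≤ l := hj
  have hjy : y < j := by
    have := hfwd j b hj (by omega) hD
    by_contra h
    exact hu ⟨j, ⟨by omega, by omega⟩, rfl⟩
  exact hF.not_adj_of_parent_lt hinj (by omega) (by omega) hj (by omega)
    (by rintro rfl; exact hib rfl) hpar hbr hD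

end NiceForest

theorem arcDisconnects_of_entryVertices_subset {D T : V → V → Prop} {r : V} {depth : V → ℕ}
    {l : ℕ} {p : ℕ → V} {x y : ℕ} (hBFS : IsBFSTree D r T depth)
    (hpath : ∀ i, i < l → T (p i) (p (i + 1))) (hinj : Set.InjOn p (Set.Iic l)) (hy : y < l)
    (hentry : entryVertices D (p '' Set.Icc x y) ⊆ {p x}) {c : ℕ} (hxc : x < c) (hcy : c ≤ y) :
    ArcDisconnects D r (p x) (p (x + 1)) (p c) := by
  have hr : r ∉ p '' Set.Ioc x y := by
    rintro ⟨d, ⟨hxd, hdy⟩, h⟩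
    exact hBFS.path_ne_root hpath (by omega) (by omega) h
  refine arcDisconnects_of_forall_adj_mem _ hr ⟨c, ⟨hxc, hcy⟩, rfl⟩ ?_
  rintro u _ hD ⟨d, ⟨hxd, hdy⟩, rfl⟩ hu
  by_cases huP : u ∈ p '' Set.Icc x y
  · obtain ⟨a, ⟨hxa, hay⟩, rfl⟩ := huP
    obtain rfl : x = a := by
      by_contra hax
      exact hu ⟨a, ⟨by omega, hay⟩, rfl⟩
    have := hBFS.le_succ_of_adj_path hpath (by omega) (by omega) hD
    obtain rfl : d = x + 1 := by omega
    exact ⟨rfl, rfl⟩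
  · have hdx : p d = p x := hentry ⟨⟨d, ⟨hxd.le, hdy⟩, rfl⟩, u, huP, hD⟩
    have := hinj (Set.mem_Iic.mpr (by omega : d ≤ l)) (Set.mem_Iic.mpr (by omega : x ≤ l)) hdx
    omega

theorem stmt11_general (D T : V → V → Prop) (r : V) (depth : V → ℕ)
    (hred : Reduced D r)
    (hBFS : IsBFSTree D r T depth)
    (l : ℕ) (p : ℕ → V) (hinj : Set.InjOn p (Set.Iic l))
    (hpath : ∀ i, i < l → T (p i) (p (i + 1)))
    (S : Set V)
    (hS : S = {v ∈ p '' Set.Iio l | ∃ u, u ∉ p '' Set.Iic l ∧ D u v})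
    (F : V → V → Prop) (hF : NiceForest D l p S F)
    (x y : ℕ) (hx : 1 ≤ x) (hxy : x ≤ y) (hy : y < l)
    (hnokey : ∀ i, x ≤ i → i ≤ y → p i ∉ keyVertices l p S F)
    (qf : ℕ → V) (hqinj : Set.InjOn qf (Set.Iic (y - x)))
    (hqim : qf '' Set.Iic (y - x) = p '' Set.Icc x y)
    (hqarc : ∀ a b, (F a b ∧ a ∈ p '' Set.Icc x y ∧ b ∈ p '' Set.Icc x y) ↔
      ∃ i, i < y - x ∧ a = qf i ∧ b = qf (i + 1))
    (hlen : x + 2 ≤ y) :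
    {v ∈ p '' Set.Icc x y | ∃ u, u ∉ p '' Set.Icc x y ∧ D u v} = {p x, qf 0} ∧
    p x ≠ qf 0 := by
  have hpx : p x ∈ entryVertices D (p '' Set.Icc x y) := by
    refine ⟨⟨x, ⟨le_rfl, hxy⟩, rfl⟩, p (x - 1), ?_, ?_⟩
    · rintro ⟨c, ⟨hxc, hcy⟩, h⟩
      have := hinj (Set.mem_Iic.mpr (by omega : c ≤ l))
        (Set.mem_Iic.mpr (by omega : x - 1 ≤ l)) h
      omega
    · simpa [Nat.sub_add_cancel hx] using hBFS.branching.sub _ _ (hpath (x - 1) (by omega))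
  have hq0 : qf 0 ∈ entryVertices D (p '' Set.Icc x y) := by
    obtain ⟨i, ⟨hxi, hiy⟩, hi⟩ : qf 0 ∈ p '' Set.Icc x y :=
      hqim ▸ ⟨0, Set.mem_Iic.mpr (Nat.zero_le _), rfl⟩
    exact hF.head_mem_entryVertices hqinj hqim hqarc ⟨i, Set.mem_Iic.mpr (by omega), hi⟩
      (fun h => hnokey i hxi hiy (Or.inl (Or.inl (Or.inl (hi ▸ h)))))
  have hsub : entryVertices D (p '' Set.Icc x y) ⊆ {p x, qf 0} := by
    intro v hv
    obtain ⟨⟨b, ⟨hxb, hby⟩, rfl⟩, -⟩ := id hv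
    by_contra h
    simp only [Set.mem_insert_iff, Set.mem_singleton_iff, not_or] at h
    have hxb' : x < b := lt_of_le_of_ne hxb (by rintro rfl; exact h.1 rfl)
    exact hF.notMem_entryVertices hinj (fun a b ha hb => hBFS.le_succ_of_adj_path hpath ha hb)
      hS hy hnokey hxb' hby (exists_adj_of_ne_head hqinj hqim hqarc ⟨b, ⟨hxb, hby⟩, rfl⟩ h.2) hv
  refine ⟨hsub.antisymm (Set.insert_subset hpx (Set.singleton_subset_iff.mpr hq0)), fun h => ?_⟩
  rw [← h, Set.pair_eq_singleton] at hsub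
  have hdis := fun c (hxc : x < c) (hcy : c ≤ y) =>
    arcDisconnects_of_entryVertices_subset hBFS hpath hinj hy hsub hxc hcy
  refine hred.rule3 _ _ _ _ (hBFS.branching.sub _ _ (hpath x (by omega))) (fun h => ?_)
    (hdis (x + 1) (by omega) (by omega)) (hdis (x + 2) (by omega) (by omega))
  have := hinj (Set.mem_Iic.mpr (by omega : x + 1 ≤ l)) (Set.mem_Iic.mpr (by omega : x + 2 ≤ l)) h
  omega

theorem stmt11 [Fintype V] (D T : V → V → Prop) (r : V) (depth : V → ℕ) (k : ℕ)
    (hred : Reduced D r)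
    (hno : ¬ HasOutBranchingWithLeaves D r k)
    (hBFS : IsBFSTree D r T depth)
    (l : ℕ) (p : ℕ → V) (hinj : Set.InjOn p (Set.Iic l))
    (hpath : ∀ i, i < l → T (p i) (p (i + 1)))
    (hdeg : ∀ i, i ≤ l → ∃! w, T (p i) w)
    (S : Set V)
    (hS : S = {v ∈ p '' Set.Iio l | ∃ u, u ∉ p '' Set.Iic l ∧ D u v})
    (F : V → V → Prop) (hF : NiceForest D l p S F)
    (hmax : ∀ F' : V → V → Prop, NiceForest D l p S F' →
      (treeLeaves F' (p '' Set.Iic l)).ncard ≤ (treeLeaves F (p '' Set.Iic l)).ncard)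
    (x y : ℕ) (hx : 1 ≤ x) (hxy : x ≤ y) (hy : y < l)
    (hnokey : ∀ i, x ≤ i → i ≤ y → p i ∉ keyVertices l p S F)
    (hb1 : ¬ F (p (x - 1)) (p x)) (hb2 : ¬ F (p y) (p (y + 1)))
    (qf : ℕ → V) (hqinj : Set.InjOn qf (Set.Iic (y - x)))
    (hqim : qf '' Set.Iic (y - x) = p '' Set.Icc x y)
    (hqarc : ∀ a b, (F a b ∧ a ∈ p '' Set.Icc x y ∧ b ∈ p '' Set.Icc x y) ↔
      ∃ i, i < y - x ∧ a = qf i ∧ b = qf (i + 1))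
    (hlen : x + 2 ≤ y) :
    {v ∈ p '' Set.Icc x y | ∃ u, u ∉ p '' Set.Icc x y ∧ D u v} = {p x, qf 0} ∧
    p x ≠ qf 0 :=
  stmt11_general D T r depth hred hBFS l p hinj hpath S hS F hF x y hx hxy hy hnokey qf hqinj hqim
    hqarc hlen
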